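/- A permutation σ of {0,…,7} satisfies {σ(v) : v ∈ V₀} = V₀ if and only if σ ∈ {id, τ, τ², τ³}; moreover τ has order 4, so the group of combinatorial automorphisms of P₀⁴(8) is the cyclic group of order 4 generated by τ. -/
import Mathlib

def V0F : Finset (Finset (Fin 8)) :=
  {{0,1,2,3}, {0,1,2,7}, {0,1,3,4}, {0,1,4,5}, {0,1,5,6}, {0,1,6,7}, {0,2,3,4}, {0,2,4,5}, {0,2,5,6}, {0,2,6,7}, {1,2,3,7}, {1,3,4,6}, {1,3,6,7}, {1,4,5,6}, {2,3,4,7}, {2,4,5,7}, {2,5,6,7}, {3,4,5,6}, {3,4,5,7}, {3,5,6,7}}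

/-- The permutation τ = (0 5 2 4)(1 6 7 3) of {0,…,7}. -/
def tau : Equiv.Perm (Fin 8) where
  toFun := ![5, 6, 4, 1, 0, 2, 7, 3]
  invFun := ![4, 3, 5, 7, 2, 0, 1, 6]
  left_inv := by intro x; fin_cases x <;> rfl
  right_inv := by intro x; fin_cases x <;> rfl

/-- Number of vertices of P₀⁴(8) lying on both facets i and j. -/
def cnt (i j : Fin 8) : ℕ := (V0F.filter (fun v => i ∈ v ∧ j ∈ v)).card

lemma cnt_pres (σ : Equiv.Perm (Fin 8))
    (h : V0F.image (fun v => v.image (fun x => σ x)) = V0F) :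
    ∀ i j, cnt (σ i) (σ j) = cnt i j := by
  intro i j
  unfold cnt
  refine (Finset.card_bij (fun v _ => v.image (fun x => σ x)) ?_ ?_ ?_).symm
  · intro v hv
    rw [Finset.mem_filter] at hv ⊢
    refine ⟨?_, Finset.mem_image_of_mem _ hv.2.1, Finset.mem_image_of_mem _ hv.2.2⟩
    have hm : Finset.image (fun x => σ x) v ∈
        Finset.image (fun v => Finset.image (fun x => σ x) v) V0F :=
      Finset.mem_image_of_mem _ hv.1
    rwa [h] at hm
  · intro a _ b _ hab
    exact Finset.image_injective σ.injective hab
  · intro b hb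
    rw [Finset.mem_filter, ← h] at hb
    obtain ⟨hb1, hi, hj⟩ := hb
    obtain ⟨a, ha, rfl⟩ := Finset.mem_image.mp hb1
    refine ⟨a, ?_, rfl⟩
    rw [Finset.mem_filter]
    simp only [Finset.mem_image] at hi hj
    obtain ⟨x, hx, hxe⟩ := hi
    obtain ⟨y, hy, hye⟩ := hj
    exact ⟨ha, σ.injective hxe ▸ hx, σ.injective hye ▸ hy⟩

lemma pin (g : Equiv.Perm (Fin 8)) (key : ∀ i j, cnt (g i) (g j) = cnt i j)
    (h0 : g 0 = 0) : g = 1 := by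
  have k0 : ∀ j, cnt 0 (g j) = cnt 0 j := by
    intro j; have := key 0 j; rwa [h0] at this
  have h13 : g 1 = 1 ∧ g 3 = 3 := by
    have d : ∀ y z : Fin 8, cnt 0 y = cnt 0 1 → cnt 0 z = cnt 0 3 →
        cnt y z = cnt 1 3 → y = 1 ∧ z = 3 := by decide
    exact d (g 1) (g 3) (k0 1) (k0 3) (key 1 3)
  obtain ⟨h1, h3⟩ := h13
  have k1 : ∀ j, cnt 1 (g j) = cnt 1 j := by
    intro j; have := key 1 j; rwa [h1] at this
  have k3 : ∀ j, cnt 3 (g j) = cnt 3 j := by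
    intro j; have := key 3 j; rwa [h3] at this
  have h2 : g 2 = 2 := by
    have d : ∀ y : Fin 8, cnt 0 y = cnt 0 2 → cnt 1 y = cnt 1 2 → y = 2 := by decide
    exact d (g 2) (k0 2) (k1 2)
  have h7 : g 7 = 7 := by
    have d : ∀ y : Fin 8, cnt 0 y = cnt 0 7 → cnt 1 y = cnt 1 7 → y = 7 := by decide
    exact d (g 7) (k0 7) (k1 7)
  have h4 : g 4 = 4 := by
    have d : ∀ y : Fin 8, cnt 0 y = cnt 0 4 → cnt 3 y = cnt 3 4 → y = 4 := by decide
    exact d (g 4) (k0 4) (k3 4)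
  have k4 : ∀ j, cnt 4 (g j) = cnt 4 j := by
    intro j; have := key 4 j; rwa [h4] at this
  have h5 : g 5 = 5 := by
    have d : ∀ y : Fin 8, cnt 0 y = cnt 0 5 → cnt 4 y = cnt 4 5 → y = 5 := by decide
    exact d (g 5) (k0 5) (k4 5)
  have h6 : g 6 = 6 := by
    have d : ∀ y : Fin 8, cnt 0 y = cnt 0 6 → cnt 4 y = cnt 4 6 → y = 6 := by decide
    exact d (g 6) (k0 6) (k4 6)
  apply Equiv.ext
  intro x
  fin_cases x
  · exact h0
  · exact h1
  · exact h2
  · exact h3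
  · exact h4
  · exact h5
  · exact h6
  · exact h7

lemma tau_symm_pres : ∀ x y, cnt (tau.symm x) (tau.symm y) = cnt x y := by decide

lemma red (σ : Equiv.Perm (Fin 8)) (hk : ∀ i j, cnt (σ i) (σ j) = cnt i j) :
    ∀ i j, cnt ((tau⁻¹ * σ) i) ((tau⁻¹ * σ) j) = cnt i j := by
  intro i j
  rw [Equiv.Perm.mul_apply, Equiv.Perm.mul_apply]
  show cnt (tau.symm (σ i)) (tau.symm (σ j)) = cnt i j
  rw [tau_symm_pres]
  exact hk i j

lemma pin' (σ : Equiv.Perm (Fin 8)) (key : ∀ i j, cnt (σ i) (σ j) = cnt i j) :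
    σ = 1 ∨ σ = tau ∨ σ = tau ^ 2 ∨ σ = tau ^ 3 := by
  have no5 : ∀ y, cnt (σ 0) y ≠ 5 := by
    intro y
    have h := key 0 (σ.symm y)
    rw [Equiv.apply_symm_apply] at h
    rw [h]
    exact (by decide : ∀ z : Fin 8, cnt 0 z ≠ 5) _
  have horb : σ 0 = 0 ∨ σ 0 = 5 ∨ σ 0 = 2 ∨ σ 0 = 4 := by
    have d : ∀ x : Fin 8, cnt x 1 ≠ 5 → cnt x 3 ≠ 5 → cnt x 2 ≠ 5 → cnt x 6 ≠ 5 →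
        x = 0 ∨ x = 5 ∨ x = 2 ∨ x = 4 := by decide
    exact d (σ 0) (no5 1) (no5 3) (no5 2) (no5 6)
  rcases horb with h | h | h | h
  · exact Or.inl (pin σ key h)
  · refine Or.inr (Or.inl ?_)
    have e : tau⁻¹ * σ = 1 := by
      apply pin _ (red σ key)
      show tau.symm (σ 0) = 0
      rw [h]; decide
    have := congrArg (fun x => tau * x) e
    simpa [← mul_assoc] using this
  · refine Or.inr (Or.inr (Or.inl ?_))
    have e : tau⁻¹ * (tau⁻¹ * σ) = 1 := by
      apply pin _ (red _ (red σ key))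
      show tau.symm (tau.symm (σ 0)) = 0
      rw [h]; decide
    have := congrArg (fun x => tau * (tau * x)) e
    simp only [mul_inv_cancel_left, mul_one] at this
    rw [this, sq]
  · refine Or.inr (Or.inr (Or.inr ?_))
    have e : tau⁻¹ * (tau⁻¹ * (tau⁻¹ * σ)) = 1 := by
      apply pin _ (red _ (red _ (red σ key)))
      show tau.symm (tau.symm (tau.symm (σ 0))) = 0
      rw [h]; decide
    have := congrArg (fun x => tau * (tau * (tau * x))) e
    simp only [mul_inv_cancel_left, mul_one] at this
    rw [this, pow_succ, sq, mul_assoc]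

/-- The combinatorial automorphisms of P₀⁴(8) are exactly 1, τ, τ², τ³,
and τ has order 4. -/
theorem stmt2 :
    (∀ σ : Equiv.Perm (Fin 8),
      V0F.image (fun v => v.image (fun x => σ x)) = V0F ↔
        (σ = 1 ∨ σ = tau ∨ σ = tau ^ 2 ∨ σ = tau ^ 3)) ∧
    orderOf tau = 4 := by
  constructor
  · intro σ
    constructor
    · intro h
      exact pin' σ (cnt_pres σ h)
    · rintro (rfl | rfl | rfl | rfl) <;> decide
  · have h4 : (4 : ℕ) = 2 ^ 2 := by norm_num
    rw [h4]
    apply orderOf_eq_prime_pow (p := 2) (n := 1)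
    · decide
    · decide
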